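/- Let p be an odd prime and n a natural number. For each natural number l ≥ 1: A(p^{2l}; n) = p^{−1−l}(p−1) if p^{2l} divides n; A(p^{2l}; n) = −p^{−1−l} if p^{2l−1} exactly divides n; and A(p^{2l}; n) = 0 if p^{2l−1} does not divide n. -/

import Mathlib

open Finset

/-- `e z = exp(2 π i z)`. -/
noncomputable def e (z : ℝ) : ℂ := Complex.exp (2 * Real.pi * Complex.I * z)

/-- The quadratic Gauss sum `S(q,a) = ∑_{r=1}^{q} e(a r² / q)`. -/
noncomputable def S (q : ℕ) (a : ℤ) : ℂ :=
  ∑ r ∈ Finset.Icc 1 q, e ((a : ℝ) * (r : ℝ) ^ 2 / (q : ℝ))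

/-- `A(q;n) = ∑_{1 ≤ a ≤ q, gcd(a,q)=1} q⁻³ S(q,a)³ e(-n a / q)`. -/
noncomputable def A (q n : ℕ) : ℂ :=
  ∑ a ∈ (Finset.Icc 1 q).filter (fun a => Nat.gcd a q = 1),
    (q : ℂ) ^ (-(3 : ℤ)) * S q (a : ℤ) ^ 3 * e (-((n : ℝ) * (a : ℝ) / (q : ℝ)))

/-!
For odd `P` and `a` prime to `P` the Gauss sum `S(P², a)` equals `P`: writing `r = u + P v`,
the inner sum over `v` is `P` or `0` according as `P ∣ 2 a u`, which leaves only `u = 0`.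
Hence `A(P²; n) = P⁻³ c_{P²}(-n)` with `c_q(m) = ∑_{(a,q)=1} e(m a / q)` the Ramanujan sum.
For `q = p^(k+1)`, `c_q(m)` is the complete sum over `1 ≤ a ≤ q` minus the sum over multiples
of `p`, i.e. `[p^(k+1) ∣ m] p^(k+1) - [p^k ∣ m] p^k`; with `P = p^l` this gives the three
cases.
-/

lemma e_add (x y : ℝ) : e (x + y) = e x * e y := by
  rw [e, e, e, ← Complex.exp_add]
  push_cast
  ring_nf

lemma e_intCast (k : ℤ) : e k = 1 :=
  Complex.exp_eq_one_iff.2 ⟨k, by push_cast; ring⟩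

lemma e_natCast (k : ℕ) : e k = 1 := by
  exact_mod_cast e_intCast k

lemma e_zero : e 0 = 1 := by
  exact_mod_cast e_intCast 0

lemma e_nat_mul (r : ℕ) (x : ℝ) : e (r * x) = e x ^ r := by
  rw [e, e, ← Complex.exp_nat_mul]
  push_cast
  ring_nf

lemma e_intCast_div_eq_one_iff {q : ℕ} (hq : q ≠ 0) (m : ℤ) :
    e (m / q) = 1 ↔ (q : ℤ) ∣ m := by
  refine ⟨fun h => ?_, fun ⟨k, hk⟩ => ?_⟩
  · obtain ⟨k, hk⟩ := Complex.exp_eq_one_iff.1 h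
    have hk' : ((m / q : ℝ) : ℂ) = k := by
      have h2pi : 2 * (Real.pi : ℂ) * Complex.I ≠ 0 := by simp [Real.pi_ne_zero]
      exact mul_left_cancel₀ h2pi (by rw [hk]; ring)
    have : (m : ℝ) = q * k := by
      rw [← mul_div_cancel₀ (m : ℝ) (Nat.cast_ne_zero.2 hq)]
      exact_mod_cast congrArg ((q : ℂ) * ·) hk'
    exact ⟨k, by exact_mod_cast this⟩
  · rw [hk, Int.cast_mul, Int.cast_natCast, mul_div_cancel_left₀ _ (Nat.cast_ne_zero.2 hq),
      e_intCast]

lemma sum_range_e_mul_div {q : ℕ} (hq : q ≠ 0) (m : ℤ) :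
    ∑ r ∈ range q, e (m * r / q) = if (q : ℤ) ∣ m then (q : ℂ) else 0 := by
  have hpow : ∀ r : ℕ, e (m * r / q) = e (m / q) ^ r := fun r => by
    rw [← e_nat_mul]
    ring_nf
  simp_rw [hpow]
  split_ifs with h
  · simp [(e_intCast_div_eq_one_iff hq m).2 h]
  · rw [geom_sum_eq (mt (e_intCast_div_eq_one_iff hq m).1 h), ← e_nat_mul,
      mul_div_cancel₀ _ (Nat.cast_ne_zero.2 hq), e_intCast, sub_self, zero_div]

lemma sum_Icc_one_eq_sum_range {M : Type*} [AddCommGroup M] (q : ℕ) (f : ℕ → M)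
    (hf : f q = f 0) : ∑ r ∈ Icc 1 q, f r = ∑ r ∈ range q, f r := by
  have h := (sum_range_succ f q).symm.trans (sum_range_succ' f q)
  rw [hf, add_left_inj] at h
  rw [← Ico_add_one_right_eq_Icc, sum_Ico_eq_sum_range, add_tsub_cancel_right, h]
  simp_rw [add_comm 1]

lemma sum_Icc_e_mul_div {q : ℕ} (hq : q ≠ 0) (m : ℤ) :
    ∑ r ∈ Icc 1 q, e (m * r / q) = if (q : ℤ) ∣ m then (q : ℂ) else 0 := by
  refine (sum_Icc_one_eq_sum_range _ _ ?_).trans (sum_range_e_mul_div hq m)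
  rw [mul_div_cancel_right₀ _ (Nat.cast_ne_zero.2 hq), e_intCast, Nat.cast_zero, mul_zero,
    zero_div, e_zero]

lemma sum_range_mul_eq_sum_sum {M : Type*} [AddCommMonoid M] (P Q : ℕ) (f : ℕ → M) :
    ∑ r ∈ range (P * Q), f r = ∑ u ∈ range P, ∑ v ∈ range Q, f (u + P * v) := by
  induction Q with
  | zero => simp
  | succ Q ih =>
    rw [mul_add_one, sum_range_add, ih, ← sum_add_distrib]
    simp_rw [sum_range_succ, add_comm (P * Q)]

lemma sum_Icc_filter_dvd {M : Type*} [AddCommMonoid M] {d : ℕ} (hd : d ≠ 0) (N : ℕ)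
    (f : ℕ → M) :
    ∑ a ∈ (Icc 1 (d * N)).filter (d ∣ ·), f a = ∑ b ∈ Icc 1 N, f (d * b) := by
  have himage : (Icc 1 (d * N)).filter (d ∣ ·) = (Icc 1 N).image (d * ·) := by
    ext a
    simp only [mem_filter, mem_Icc, mem_image]
    constructor
    · rintro ⟨⟨h1, h2⟩, b, rfl⟩
      exact ⟨b, ⟨Nat.pos_of_mul_pos_left h1,
        Nat.le_of_mul_le_mul_left h2 (Nat.pos_of_ne_zero hd)⟩, rfl⟩
    · rintro ⟨b, ⟨h1, h2⟩, rfl⟩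
      exact ⟨⟨Nat.mul_pos (Nat.pos_of_ne_zero hd) h1, Nat.mul_le_mul_left d h2⟩,
        dvd_mul_right d b⟩
  rw [himage, sum_image (mul_right_injective₀ hd).injOn]

lemma S_sq_of_coprime {P : ℕ} (hP : P ≠ 0) {a : ℕ} (hcop : P.Coprime (2 * a)) :
    S (P ^ 2) a = P := by
  have hP' : (P : ℝ) ≠ 0 := Nat.cast_ne_zero.2 hP
  have hterm : ∀ u v : ℕ, e (a * ((u + P * v : ℕ) : ℝ) ^ 2 / ((P ^ 2 : ℕ) : ℝ)) =
      e (a * u ^ 2 / ((P ^ 2 : ℕ) : ℝ)) * e (((2 * a * u : ℕ) : ℤ) * v / P) := by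
    intro u v
    have harg : a * ((u + P * v : ℕ) : ℝ) ^ 2 / ((P ^ 2 : ℕ) : ℝ) =
        a * u ^ 2 / ((P ^ 2 : ℕ) : ℝ) + ((2 * a * u : ℕ) : ℤ) * v / P +
          (a * v ^ 2 : ℕ) := by
      push_cast
      field_simp
      ring
    rw [harg, e_add, e_natCast, mul_one, e_add]
  rw [S, sum_Icc_one_eq_sum_range, sq, sum_range_mul_eq_sum_sum]
  · simp_rw [Int.cast_natCast, ← sq, hterm, ← mul_sum, sum_range_e_mul_div hP]
    rw [sum_eq_single 0]
    · simp [e_zero]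
    · intro u hu hu0
      rw [if_neg fun hdvd => hu0 <| Nat.eq_zero_of_dvd_of_lt
        (hcop.dvd_of_dvd_mul_left (Int.natCast_dvd_natCast.1 hdvd)) (mem_range.1 hu), mul_zero]
    · simp [Nat.pos_of_ne_zero hP]
  · push_cast
    rw [show (a : ℝ) * ((P : ℝ) ^ 2) ^ 2 / (P : ℝ) ^ 2 = (a * P ^ 2 : ℕ) by
      push_cast; field_simp, e_natCast]
    simp [e_zero]

noncomputable def ramanujanSum (q : ℕ) (m : ℤ) : ℂ :=
  ∑ a ∈ (Icc 1 q).filter (fun a => Nat.gcd a q = 1), e (m * a / q)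

lemma ramanujanSum_prime_pow_succ {p : ℕ} (hp : p.Prime) (k : ℕ) (m : ℤ) :
    ramanujanSum (p ^ (k + 1)) m =
      (if ((p ^ (k + 1) : ℕ) : ℤ) ∣ m then ((p ^ (k + 1) : ℕ) : ℂ) else 0) -
        if ((p ^ k : ℕ) : ℤ) ∣ m then ((p ^ k : ℕ) : ℂ) else 0 := by
  have hcoprime : ∀ a, Nat.gcd a (p ^ (k + 1)) = 1 ↔ ¬ p ∣ a := fun a =>
    (Nat.coprime_pow_right_iff k.succ_pos _ _).trans
      (Nat.coprime_comm.trans hp.coprime_iff_not_dvd)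
  have hmultiples :
      ∑ a ∈ (Icc 1 (p ^ (k + 1))).filter (p ∣ ·), e (m * a / (p ^ (k + 1) : ℕ)) =
        ∑ b ∈ Icc 1 (p ^ k), e (m * b / (p ^ k : ℕ)) := by
    rw [pow_succ', sum_Icc_filter_dvd hp.ne_zero]
    refine sum_congr rfl fun b _ => congrArg e ?_
    have : (p : ℝ) ≠ 0 := Nat.cast_ne_zero.2 hp.ne_zero
    push_cast
    field_simp
  rw [ramanujanSum, filter_congr fun a _ => hcoprime a, eq_sub_iff_add_eq',
    ← sum_Icc_e_mul_div (pow_ne_zero _ hp.ne_zero),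
    ← sum_Icc_e_mul_div (pow_ne_zero _ hp.ne_zero), ← hmultiples, sum_filter_add_sum_filter_not]

lemma A_sq_of_odd {P : ℕ} (hP : Odd P) (n : ℕ) :
    A (P ^ 2) n = (P : ℂ) ^ (-3 : ℤ) * ramanujanSum (P ^ 2) (-n) := by
  have hP0 : (P : ℂ) ≠ 0 := Nat.cast_ne_zero.2 hP.pos.ne'
  rw [A, ramanujanSum, mul_sum]
  refine sum_congr rfl fun a ha => ?_
  have hcop : P.Coprime (2 * a) := by
    refine Nat.Coprime.mul_right (Nat.coprime_two_right.2 hP) ?_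
    exact ((Nat.coprime_pow_right_iff two_pos a P).1 (mem_filter.1 ha).2).symm
  rw [S_sq_of_coprime hP.pos.ne' hcop, Int.cast_neg, Int.cast_natCast, neg_mul, neg_div]
  congr 1
  push_cast
  rw [← zpow_natCast, ← zpow_natCast, ← zpow_mul, ← zpow_add₀ hP0]
  norm_num

lemma A_prime_pow_even {p : ℕ} (hp : p.Prime) (hodd : Odd p) (k n : ℕ) :
    A (p ^ (2 * k + 1 + 1)) n = (p : ℂ) ^ (-3 * (k + 1 : ℤ)) *
      ((if p ^ (2 * k + 1 + 1) ∣ n then (p : ℂ) ^ (2 * k + 1 + 1) else 0) -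
        if p ^ (2 * k + 1) ∣ n then (p : ℂ) ^ (2 * k + 1) else 0) := by
  have hsq : p ^ (2 * k + 1 + 1) = (p ^ (k + 1)) ^ 2 := by ring
  rw [hsq, A_sq_of_odd hodd.pow, ← hsq, ramanujanSum_prime_pow_succ hp]
  simp only [dvd_neg, Int.natCast_dvd_natCast]
  push_cast
  rw [← zpow_natCast, ← zpow_mul]
  congr 2
  push_cast
  ring

theorem A_even_prime_power (p : ℕ) (hp : p.Prime) (hodd : Odd p) (n : ℕ)
    (l : ℕ) (hl : 1 ≤ l) :
    (p ^ (2 * l) ∣ n → A (p ^ (2 * l)) n = (p : ℂ) ^ (-1 - (l : ℤ)) * ((p : ℂ) - 1)) ∧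
    ((p ^ (2 * l - 1) ∣ n ∧ ¬ p ^ (2 * l) ∣ n) →
      A (p ^ (2 * l)) n = -(p : ℂ) ^ (-1 - (l : ℤ))) ∧
    (¬ p ^ (2 * l - 1) ∣ n → A (p ^ (2 * l)) n = 0) := by
  obtain ⟨k, rfl⟩ : ∃ k, l = k + 1 := ⟨l - 1, by omega⟩
  rw [show 2 * (k + 1) - 1 = 2 * k + 1 by omega, show 2 * (k + 1) = 2 * k + 1 + 1 by ring]
  have hscale : (p : ℂ) ^ (-3 * (k + 1 : ℤ)) * (p : ℂ) ^ (2 * k + 1) =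
      (p : ℂ) ^ (-1 - ((k + 1 : ℕ) : ℤ)) := by
    rw [← zpow_natCast, ← zpow_add₀ (Nat.cast_ne_zero.2 hp.ne_zero)]
    congr 1
    push_cast
    ring
  have hdvd : p ^ (2 * k + 1 + 1) ∣ n → p ^ (2 * k + 1) ∣ n :=
    (pow_dvd_pow p (2 * k + 1).le_succ).trans
  refine ⟨fun h => ?_, fun ⟨h, h'⟩ => ?_, fun h => ?_⟩
  · rw [A_prime_pow_even hp hodd, if_pos h, if_pos (hdvd h), pow_succ _ (2 * k + 1), ← hscale]
    ring
  · rw [A_prime_pow_even hp hodd, if_neg h', if_pos h, ← hscale]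
    ring
  · rw [A_prime_pow_even hp hodd, if_neg (mt hdvd h), if_neg h, sub_zero, mul_zero]
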